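/- Let O be a subring of the ring of integers of a number field K, let ξ be a nonzero algebraic integer with [K(ξ):K] = d, and let P(x) = a_0 + a_1 x + ... + a_n x^n ∈ O[x] with 1 ≤ n < d. Then the house of α = P(ξ) satisfies |α|_house ≥ max over embeddings σ : K → ℂ of (1 − d^{3/2} D(τ_σ(ξ)/‖τ_σ(ξ)‖)) · |σ(a_n)| · ‖τ_σ(ξ)‖^n, where τ_σ(ξ) is the d-tuple of images of ξ under the d extensions of σ to K(ξ), and ‖·‖ is the maximum norm. -/

import Mathlib

/-- `ζ_d = exp(2πi/d)`. -/
noncomputable def zetad (d : ℕ) : ℂ := Complex.exp (2 * Real.pi * Complex.I / d)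

/-- The finite discrepancy `D(ξ) = inf_{|u|=1} max_j min_i |ξ_i − u ζ_d^j|`. -/
noncomputable def Disc {d : ℕ} (ξ : Fin d → ℂ) : ℝ :=
  sInf {t : ℝ | ∃ u : ℂ, ‖u‖ = 1 ∧
    t = ⨆ j : Fin d, ⨅ i : Fin d, ‖ξ i - u * zetad d ^ ((j : ℕ) + 1)‖}

/-- The house of an algebraic number `α`: the maximum modulus of the roots of its
minimal polynomial over `ℚ` (its conjugates). -/
noncomputable def house (α : ℂ) : ℝ :=
  sSup {x : ℝ | ∃ z : ℂ, Polynomial.aeval z (minpoly ℚ α) = 0 ∧ x = ‖z‖}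

/-!
Write `Q z = ∑ σ(a_k) z^k`, let `r_i` be the `d` conjugates of `ξ` over `σ` and `R = max |r_i|`;
every `Q r_i` is a conjugate of `α`, so `|Q r_i| ≤ house α`. Sample `Q` at the `d` points
`w_j = R u ζ_d^(j+1)`. Since `n < d`, the monomials `z^k` (`k ≤ n`) are orthogonal on these points,
so Parseval gives `∑_k (|σ a_k| R^k)² ≤ M²` for `M = max_j |Q w_j|`; hence `|σ a_n| R^n ≤ M` and, by
Cauchy–Schwarz, `∑_k k |σ a_k| R^k ≤ d^(3/2) M`. If `u` nearly realises the discrepancy `D`, each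
`w_j` lies within `R D` of some `r_i`, and the resulting Lipschitz bound
`|Q w_j - Q r_i| ≤ D d^(3/2) M` yields `(1 - d^(3/2) D) M ≤ house α`.
-/

open Polynomial ComplexConjugate

lemma sum_pow_succ_of_pow_eq_one {K : Type*} [Field K] [DecidableEq K] {d : ℕ} {ω : K}
    (hω : ω ^ d = 1) :
    ∑ j : Fin d, ω ^ ((j : ℕ) + 1) = if ω = 1 then (d : K) else 0 := by
  split_ifs with h1
  · simp [h1]
  · have hgeom : ∑ j ∈ Finset.range d, ω ^ j = 0 := by
      rw [geom_sum_eq h1, hω, sub_self, zero_div]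
    simp only [pow_succ, ← Finset.sum_mul, Fin.sum_univ_eq_sum_range (fun j => ω ^ j), hgeom,
      zero_mul]

lemma IsPrimitiveRoot.sum_pow_mul_conj_pow {ζ u : ℂ} {d k l : ℕ} (hζ : IsPrimitiveRoot ζ d)
    (hu : ‖u‖ = 1) (hk : k < d) (hl : l < d) :
    ∑ j : Fin d, (u * ζ ^ ((j : ℕ) + 1)) ^ k * conj (u * ζ ^ ((j : ℕ) + 1)) ^ l =
      if k = l then (d : ℂ) else 0 := by
  have hζ1 : ‖ζ‖ = 1 := hζ.norm'_eq_one (by omega)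
  have hterm : ∀ j : Fin d, (u * ζ ^ ((j : ℕ) + 1)) ^ k * conj (u * ζ ^ ((j : ℕ) + 1)) ^ l =
      u ^ k * conj u ^ l * (ζ ^ k * (ζ ^ l)⁻¹) ^ ((j : ℕ) + 1) := by
    intro j
    rw [map_mul, map_pow, ← Complex.inv_eq_conj hζ1]
    ring
  have hω : (ζ ^ k * (ζ ^ l)⁻¹) ^ d = 1 := by
    rw [mul_pow, inv_pow, ← pow_mul, ← pow_mul, mul_comm k, mul_comm l, pow_mul, pow_mul,
      hζ.pow_eq_one, one_pow, one_pow, inv_one, mul_one]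
  have hω1 : ζ ^ k * (ζ ^ l)⁻¹ = 1 ↔ k = l := by
    rw [mul_inv_eq_one₀ (pow_ne_zero _ (hζ.ne_zero (by omega)))]
    exact ⟨fun h => hζ.pow_inj hk hl h, fun h => h ▸ rfl⟩
  rw [Finset.sum_congr rfl fun j _ => hterm j, ← Finset.mul_sum, sum_pow_succ_of_pow_eq_one hω]
  by_cases hkl : k = l
  · subst hkl
    rw [if_pos (hω1.mpr rfl), if_pos rfl, ← mul_pow, Complex.mul_conj', hu]
    simp
  · rw [if_neg (mt hω1.mp hkl), if_neg hkl, mul_zero]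

lemma IsPrimitiveRoot.sum_norm_sq_sum_mul_pow {ζ u : ℂ} {d n : ℕ} (hζ : IsPrimitiveRoot ζ d)
    (hu : ‖u‖ = 1) (hnd : n < d) (g : Fin (n + 1) → ℂ) :
    ∑ j : Fin d, ‖∑ k : Fin (n + 1), g k * (u * ζ ^ ((j : ℕ) + 1)) ^ (k : ℕ)‖ ^ 2 =
      d * ∑ k : Fin (n + 1), ‖g k‖ ^ 2 := by
  set t : Fin d → ℂ := fun j => u * ζ ^ ((j : ℕ) + 1)
  have horth (k l : Fin (n + 1)) :
      ∑ j, t j ^ (k : ℕ) * conj (t j) ^ (l : ℕ) = if k = l then (d : ℂ) else 0 := by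
    simp only [t, hζ.sum_pow_mul_conj_pow hu (by omega : (k : ℕ) < d) (by omega : (l : ℕ) < d),
      Fin.val_inj]
  have hexpand (j : Fin d) :
      (∑ k, g k * t j ^ (k : ℕ)) * conj (∑ l, g l * t j ^ (l : ℕ)) =
        ∑ k, ∑ l, g k * conj (g l) * (t j ^ (k : ℕ) * conj (t j) ^ (l : ℕ)) := by
    simp only [map_sum, map_mul, map_pow, Finset.sum_mul_sum]
    exact Finset.sum_congr rfl fun k _ => Finset.sum_congr rfl fun l _ => by ring
  change ∑ j, ‖∑ k, g k * t j ^ (k : ℕ)‖ ^ 2 = _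
  apply Complex.ofReal_injective
  push_cast
  simp only [← Complex.mul_conj', hexpand]
  rw [Finset.sum_comm, Finset.mul_sum]
  refine Finset.sum_congr rfl fun k _ => ?_
  rw [Finset.sum_comm]
  simp only [← Finset.mul_sum, horth, mul_ite, mul_zero, Finset.sum_ite_eq, Finset.mem_univ,
    if_true]
  ring

lemma norm_pow_sub_pow_le {A : Type*} [NormedCommRing A] [NormOneClass A] {z w : A} {R : ℝ}
    (hz : ‖z‖ ≤ R) (hw : ‖w‖ ≤ R) (k : ℕ) :
    ‖z ^ k - w ^ k‖ ≤ k * R ^ (k - 1) * ‖z - w‖ := by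
  have hR : 0 ≤ R := (norm_nonneg z).trans hz
  have hterm (i : ℕ) (hi : i ∈ Finset.range k) : ‖z ^ i * w ^ (k - 1 - i)‖ ≤ R ^ (k - 1) := by
    have hik : i + (k - 1 - i) = k - 1 := by have := Finset.mem_range.mp hi; omega
    calc ‖z ^ i * w ^ (k - 1 - i)‖ ≤ ‖z‖ ^ i * ‖w‖ ^ (k - 1 - i) :=
          (norm_mul_le _ _).trans (mul_le_mul (norm_pow_le _ _) (norm_pow_le _ _)
            (norm_nonneg _) (by positivity))
      _ ≤ R ^ i * R ^ (k - 1 - i) := by gcongr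
      _ = R ^ (k - 1) := by rw [← pow_add, hik]
  rw [← geom_sum₂_mul]
  refine (norm_mul_le _ _).trans (mul_le_mul_of_nonneg_right ?_ (norm_nonneg _))
  refine (norm_sum_le _ _).trans ?_
  simpa using Finset.sum_le_card_nsmul _ _ _ hterm

lemma sum_natCast_mul_le {n d : ℕ} (hnd : n < d) (b : Fin (n + 1) → ℝ) {M : ℝ} (hM : 0 ≤ M)
    (hb : ∑ k, b k ^ 2 ≤ M ^ 2) :
    ∑ k : Fin (n + 1), (k : ℝ) * b k ≤ (d : ℝ) ^ ((3 : ℝ) / 2) * M := by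
  have hcube : ((d : ℝ) ^ ((3 : ℝ) / 2)) ^ 2 = (d : ℝ) ^ 3 := by
    rw [← Real.rpow_natCast, ← Real.rpow_mul (Nat.cast_nonneg d)]
    norm_num
  have hsq : ∑ k : Fin (n + 1), (k : ℝ) ^ 2 ≤ (d : ℝ) ^ 3 := by
    have hk (k : Fin (n + 1)) (_ : k ∈ Finset.univ) : (k : ℝ) ^ 2 ≤ (d : ℝ) ^ 2 := by
      gcongr
      exact_mod_cast (by omega : (k : ℕ) ≤ d)
    calc ∑ k : Fin (n + 1), (k : ℝ) ^ 2 ≤ (n + 1 : ℕ) * (d : ℝ) ^ 2 := by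
          simpa using Finset.sum_le_card_nsmul _ _ _ hk
      _ ≤ d * (d : ℝ) ^ 2 := by gcongr; exact_mod_cast hnd
      _ = (d : ℝ) ^ 3 := by ring
  refine le_of_abs_le (abs_le_of_sq_le_sq ?_ (by positivity))
  calc (∑ k : Fin (n + 1), (k : ℝ) * b k) ^ 2
      ≤ (∑ k : Fin (n + 1), (k : ℝ) ^ 2) * ∑ k, b k ^ 2 :=
        Finset.sum_mul_sq_le_sq_mul_sq _ _ _
    _ ≤ (d : ℝ) ^ 3 * M ^ 2 := by gcongr
    _ = ((d : ℝ) ^ ((3 : ℝ) / 2) * M) ^ 2 := by rw [mul_pow, hcube]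

lemma norm_sum_sub_sum_le {A : Type*} [NormedCommRing A] [NormOneClass A] {n : ℕ}
    (c : Fin (n + 1) → A) {z w : A} {R δ : ℝ} (hz : ‖z‖ ≤ R) (hw : ‖w‖ ≤ R)
    (hzw : ‖z - w‖ ≤ R * δ) :
    ‖∑ k : Fin (n + 1), c k * z ^ (k : ℕ) - ∑ k : Fin (n + 1), c k * w ^ (k : ℕ)‖ ≤
      δ * ∑ k : Fin (n + 1), (k : ℝ) * (‖c k‖ * R ^ (k : ℕ)) := by
  have hR : 0 ≤ R := (norm_nonneg z).trans hz
  have hpow (m : ℕ) : (m : ℝ) * R ^ (m - 1) * (R * δ) = δ * (m * R ^ m) := by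
    cases m <;> simp [pow_succ]; ring
  rw [← Finset.sum_sub_distrib, Finset.mul_sum]
  refine (norm_sum_le _ _).trans (Finset.sum_le_sum fun k _ => ?_)
  calc ‖c k * z ^ (k : ℕ) - c k * w ^ (k : ℕ)‖
      ≤ ‖c k‖ * ((k : ℕ) * R ^ ((k : ℕ) - 1) * (R * δ)) := by
        rw [← mul_sub]
        refine (norm_mul_le _ _).trans (mul_le_mul_of_nonneg_left ?_ (norm_nonneg _))
        exact (norm_pow_sub_pow_le hz hw k).trans (by gcongr)
    _ = δ * ((k : ℝ) * (‖c k‖ * R ^ (k : ℕ))) := by rw [hpow]; ring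

lemma IsPrimitiveRoot.one_sub_mul_norm_mul_pow_le {ζ u : ℂ} {d n : ℕ}
    (hζ : IsPrimitiveRoot ζ d) (hu : ‖u‖ = 1) (hnd : n < d) (c : Fin (n + 1) → ℂ)
    {R δ H : ℝ} (hR : 0 ≤ R) (hδ : 0 ≤ δ) (z : Fin d → ℂ) (hzR : ∀ j, ‖z j‖ ≤ R)
    (hzH : ∀ j, ‖∑ k : Fin (n + 1), c k * z j ^ (k : ℕ)‖ ≤ H)
    (hz : ∀ j, ‖z j - R * (u * ζ ^ ((j : ℕ) + 1))‖ ≤ R * δ) :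
    (1 - (d : ℝ) ^ ((3 : ℝ) / 2) * δ) * ‖c (Fin.last n)‖ * R ^ n ≤ H := by
  set Q : ℂ → ℂ := fun x => ∑ k : Fin (n + 1), c k * x ^ (k : ℕ)
  set w : Fin d → ℂ := fun j => R * (u * ζ ^ ((j : ℕ) + 1))
  set C : ℝ := (d : ℝ) ^ ((3 : ℝ) / 2)
  have : Nonempty (Fin d) := ⟨⟨0, by omega⟩⟩
  have hwR (j : Fin d) : ‖w j‖ = R := by
    simp [w, hu, hζ.norm'_eq_one (by omega), abs_of_nonneg hR]
  obtain ⟨jm, hjm⟩ := Finite.exists_max fun j => ‖Q (w j)‖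
  set M := ‖Q (w jm)‖
  have hsq : ∑ k : Fin (n + 1), (‖c k‖ * R ^ (k : ℕ)) ^ 2 ≤ M ^ 2 := by
    have hparseval := hζ.sum_norm_sq_sum_mul_pow hu hnd fun k => c k * R ^ (k : ℕ)
    simp only [norm_mul, norm_pow, Complex.norm_real, Real.norm_of_nonneg hR] at hparseval
    have hQw (j : Fin d) : Q (w j) = ∑ k : Fin (n + 1),
        c k * (R : ℂ) ^ (k : ℕ) * (u * ζ ^ ((j : ℕ) + 1)) ^ (k : ℕ) := by
      simp only [Q, w, mul_pow, mul_assoc]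
    have hle : ∑ j : Fin d, ‖Q (w j)‖ ^ 2 ≤ d * M ^ 2 := by
      simpa using Finset.sum_le_card_nsmul Finset.univ _ _ fun j _ =>
        pow_le_pow_left₀ (norm_nonneg _) (hjm j) 2
    simp only [hQw, hparseval] at hle
    exact le_of_mul_le_mul_left hle (by exact_mod_cast (by omega : 0 < d))
  have hlead : ‖c (Fin.last n)‖ * R ^ n ≤ M := by
    refine le_of_abs_le (abs_le_of_sq_le_sq ((Finset.single_le_sum (fun k _ => ?_)
      (Finset.mem_univ (Fin.last n))).trans hsq) (norm_nonneg _))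
    positivity
  have hM : M ≤ H + δ * (C * M) := by
    have hlip := norm_sum_sub_sum_le c (hwR jm).le (hzR jm) (by rw [norm_sub_rev]; exact hz jm)
    have hB := sum_natCast_mul_le hnd _ (norm_nonneg _) hsq
    calc M ≤ ‖Q (z jm)‖ + ‖Q (w jm) - Q (z jm)‖ := norm_le_norm_add_norm_sub' _ _
      _ ≤ H + δ * (C * M) := add_le_add (hzH jm) (hlip.trans (by gcongr))
  rcases le_or_gt (1 - C * δ) 0 with hneg | hpos
  · have hH : 0 ≤ H := (norm_nonneg _).trans (hzH jm)
    nlinarith [mul_nonneg (norm_nonneg (c (Fin.last n))) (pow_nonneg hR n)]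
  · calc (1 - C * δ) * ‖c (Fin.last n)‖ * R ^ n
          = (1 - C * δ) * (‖c (Fin.last n)‖ * R ^ n) := by ring
      _ ≤ (1 - C * δ) * M := by gcongr
      _ ≤ H := by linarith

lemma isPrimitiveRoot_zetad {d : ℕ} (hd : d ≠ 0) : IsPrimitiveRoot (zetad d) d := by
  simpa [zetad, mul_comm] using Complex.isPrimitiveRoot_exp d hd

lemma Disc_nonneg {d : ℕ} (x : Fin d → ℂ) : 0 ≤ Disc x :=
  Real.sInf_nonneg <| by
    rintro t ⟨u, -, rfl⟩
    exact Real.iSup_nonneg fun j => Real.iInf_nonneg fun i => norm_nonneg _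

lemma exists_norm_sub_lt_of_Disc_lt {d : ℕ} {x : Fin d → ℂ} {δ : ℝ} (h : Disc x < δ) :
    ∃ u : ℂ, ‖u‖ = 1 ∧ ∀ j : Fin d, ∃ i, ‖x i - u * zetad d ^ ((j : ℕ) + 1)‖ < δ := by
  obtain ⟨_, ⟨u, hu, rfl⟩, hlt⟩ := exists_lt_of_csInf_lt (by exact ⟨_, 1, norm_one, rfl⟩) h
  refine ⟨u, hu, fun j => ?_⟩
  have : Nonempty (Fin d) := ⟨j⟩
  obtain ⟨i, hi⟩ := exists_eq_ciInf_of_finite (f := fun i => ‖x i - u * zetad d ^ ((j : ℕ) + 1)‖)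
  exact ⟨i, hi ▸ (le_ciSup (Set.finite_range _).bddAbove j).trans_lt hlt⟩

theorem one_sub_mul_Disc_mul_le {d n : ℕ} (hnd : n < d) (c : Fin (n + 1) → ℂ)
    (x : Fin d → ℂ) {H : ℝ} (hH : ∀ i, ‖∑ k : Fin (n + 1), c k * x i ^ (k : ℕ)‖ ≤ H) :
    (1 - (d : ℝ) ^ ((3 : ℝ) / 2) * Disc (fun i => x i / ((⨆ i, ‖x i‖ : ℝ) : ℂ))) *
      ‖c (Fin.last n)‖ * (⨆ i, ‖x i‖) ^ n ≤ H := by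
  set R := ⨆ i, ‖x i‖
  set D := Disc fun i => x i / (R : ℂ)
  have hxR (i : Fin d) : ‖x i‖ ≤ R :=
    le_ciSup (f := fun i => ‖x i‖) (Set.finite_range _).bddAbove i
  have hR : 0 ≤ R := (norm_nonneg _).trans (hxR ⟨0, by omega⟩)
  have hclose {y v : ℂ} {δ : ℝ} (hy : ‖y‖ ≤ R) (hyv : ‖y / R - v‖ < δ) :
      ‖y - R * v‖ ≤ R * δ := by
    rcases hR.eq_or_lt with hR0 | hRpos
    -- if `R = 0` then `y = 0`, so the junk value `y / 0 = 0` does no harm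
    · simp [← hR0, norm_le_zero_iff.mp (hR0 ▸ hy)]
    · have hRC : (R : ℂ) ≠ 0 := by exact_mod_cast hRpos.ne'
      rw [show y - R * v = R * (y / R - v) by field_simp, norm_mul, Complex.norm_real,
        Real.norm_of_nonneg hR]
      gcongr
  have hgt (δ : ℝ) (hδ : D < δ) :
      (1 - (d : ℝ) ^ ((3 : ℝ) / 2) * δ) * ‖c (Fin.last n)‖ * R ^ n ≤ H := by
    obtain ⟨u, hu, hsel⟩ := exists_norm_sub_lt_of_Disc_lt hδ
    choose sel hsel using hsel
    exact (isPrimitiveRoot_zetad (by omega)).one_sub_mul_norm_mul_pow_le hu hnd c hR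
      ((Disc_nonneg _).trans hδ.le) (x ∘ sel) (fun j => hxR _) (fun j => hH _)
      fun j => hclose (hxR _) (hsel j)
  have hcont : Continuous fun δ : ℝ =>
      (1 - (d : ℝ) ^ ((3 : ℝ) / 2) * δ) * ‖c (Fin.last n)‖ * R ^ n := by fun_prop
  exact le_of_tendsto ((hcont.tendsto D).mono_left nhdsWithin_le_nhds)
    (eventually_nhdsWithin_of_forall (s := Set.Ioi D) hgt)

lemma le_house {α : ℂ} (hα : IsIntegral ℚ α) {z : ℂ} (hz : aeval z (minpoly ℚ α) = 0) :
    ‖z‖ ≤ house α := by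
  refine le_csSup (BddAbove.mono ?_ (((minpoly ℚ α).rootSet_finite ℂ).image norm).bddAbove)
    ⟨z, hz, rfl⟩
  rintro _ ⟨w, hw, rfl⟩
  exact ⟨w, mem_rootSet.mpr ⟨minpoly.ne_zero hα, hw⟩, rfl⟩

lemma Polynomial.eval_map_eval_map_eq_zero {K L S : Type*} [Field K] [CommRing L] [Algebra K L]
    [CommRing S] {x : L} {P f : K[X]} (hf : aeval (aeval x P) f = 0) (σ : K →+* S) {y : S}
    (hy : ((minpoly K x).map σ).IsRoot y) : (f.map σ).eval ((P.map σ).eval y) = 0 := by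
  have hdvd : minpoly K x ∣ f.comp P := minpoly.dvd K x (by rw [aeval_comp, hf])
  simpa only [Polynomial.map_comp, eval_comp] using
    eval_eq_zero_of_dvd_of_eval_eq_zero (Polynomial.map_dvd σ hdvd) hy

lemma aeval_eval_map_minpoly_eq_zero {K : Type*} [Field K] [Algebra ℚ K] [Algebra K ℂ]
    [IsScalarTower ℚ K ℂ] {x : ℂ} (P : K[X]) (σ : K →+* ℂ) {y : ℂ}
    (hy : ((minpoly K x).map σ).IsRoot y) :
    aeval ((P.map σ).eval y) (minpoly ℚ (aeval x P)) = 0 := by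
  have h := Polynomial.eval_map_eval_map_eq_zero
    (f := (minpoly ℚ (aeval x P)).map (algebraMap ℚ K))
    (by rw [aeval_map_algebraMap, minpoly.aeval]) σ hy
  rwa [Polynomial.map_map, Subsingleton.elim (σ.comp (algebraMap ℚ K)) (algebraMap ℚ ℂ),
    eval_map_algebraMap] at h

theorem stmt15_general (K : IntermediateField ℚ ℂ) [FiniteDimensional ℚ K]
    (ξ : ℂ)
    (d : ℕ) (hd : d = (minpoly K ξ).natDegree)
    (n : ℕ) (hnd : n < d)
    (a : Fin (n + 1) → K)
    (r : (K →+* ℂ) → Fin d → ℂ)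
    (hr : ∀ σ : K →+* ℂ,
      (minpoly K ξ).map σ = ∏ i : Fin d, (Polynomial.X - Polynomial.C (r σ i)))
    (σ : K →+* ℂ) :
    (1 - (d : ℝ) ^ ((3 : ℝ) / 2) *
          Disc (fun i => r σ i / ((⨆ i : Fin d, ‖r σ i‖ : ℝ) : ℂ))) *
        ‖σ (a (Fin.last n))‖ * (⨆ i : Fin d, ‖r σ i‖) ^ n ≤
      house (∑ j : Fin (n + 1), (a j : ℂ) * ξ ^ (j : ℕ)) := by
  have hξ : IsIntegral K ξ := minpoly.ne_zero_iff.mp fun h => by simp [h] at hd; omega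
  set P : K[X] := ∑ j : Fin (n + 1), C (a j) * X ^ (j : ℕ)
  have hPξ : aeval ξ P = ∑ j : Fin (n + 1), (a j : ℂ) * ξ ^ (j : ℕ) := by simp [P]
  have hα : IsIntegral ℚ (aeval ξ P) := by
    rw [hPξ]
    exact IsIntegral.sum _ fun j _ =>
      (Algebra.IsIntegral.isIntegral (a j)).algebraMap.mul ((isIntegral_trans ξ hξ).pow _)
  rw [← hPξ]
  refine one_sub_mul_Disc_mul_le hnd (fun j => σ (a j)) (r σ) fun i => le_house hα ?_
  have hroot : ((minpoly K ξ).map σ).IsRoot (r σ i) := by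
    simp [hr σ, Polynomial.eval_prod, Finset.prod_eq_zero_iff, sub_eq_zero]
  simpa [P, Polynomial.map_sum, eval_finsetSum] using aeval_eval_map_minpoly_eq_zero P σ hroot

/-- Let `O ⊆ O_K` (here: the coefficients `a j ∈ K` are integral over `ℤ`),
`ξ` a nonzero algebraic integer with `[K(ξ):K] = d`, and `P = a_0 + ⋯ + a_n x^n` with
`1 ≤ n < d`, `a_n ≠ 0`. For each embedding `σ : K → ℂ` with `r σ` the `d`-tuple of roots of
`σ(M_{ξ,K})` (the images of `ξ` under the `d` extensions of `σ`), the house of `α = P(ξ)`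
is at least `(1 − d^{3/2} D(r σ/‖r σ‖)) |σ(a_n)| ‖r σ‖^n`. -/
theorem stmt15 (K : IntermediateField ℚ ℂ) [FiniteDimensional ℚ K]
    (ξ : ℂ) (hξ0 : ξ ≠ 0) (hξint : IsIntegral ℤ ξ)
    (d : ℕ) (hd : d = (minpoly K ξ).natDegree)
    (n : ℕ) (hn1 : 1 ≤ n) (hnd : n < d)
    (a : Fin (n + 1) → K) (haint : ∀ j, IsIntegral ℤ (a j : ℂ))
    (han : a (Fin.last n) ≠ 0)
    (r : (K →+* ℂ) → Fin d → ℂ)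
    (hr : ∀ σ : K →+* ℂ,
      (minpoly K ξ).map σ = ∏ i : Fin d, (Polynomial.X - Polynomial.C (r σ i)))
    (σ : K →+* ℂ) :
    (1 - (d : ℝ) ^ ((3 : ℝ) / 2) *
          Disc (fun i => r σ i / ((⨆ i : Fin d, ‖r σ i‖ : ℝ) : ℂ))) *
        ‖σ (a (Fin.last n))‖ * (⨆ i : Fin d, ‖r σ i‖) ^ n ≤
      house (∑ j : Fin (n + 1), (a j : ℂ) * ξ ^ (j : ℕ)) :=
  stmt15_general K ξ d hd n hnd a r hr σ
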